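/- arXiv:1906.07636 — 5 statements merged into one kernel-verified Lean document; each statement's English description precedes it below -/
import Mathlib

section
/- Let s ≥ 1, let R be a commutative ℚ-algebra, and let Φ(y₁,…,y_s) ∈ R[y₁,…,y_s] be a symmetric polynomial. Then the coefficient of the monomial ε₁^{s−1} ε₂^{s−1} ⋯ ε_s^{s−1} in the polynomial ∏_{1≤j<k≤s} (ε_k − ε_j)² · Φ(w + ε₁, …, w + ε_s) (regarded as a polynomial in ε₁,…,ε_s with coefficients in R[w]) equals (−1)^{s(s−1)/2} · s! · Φ(w, …, w). -/
open Finset MvPolynomial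

private lemma degree_univ {n : ℕ} (d : Fin n →₀ ℕ) : d.degree = ∑ i, d i :=
  Finset.sum_subset (Finset.subset_univ _)
    (fun x _ hx => by simpa using (Finsupp.notMem_support_iff.mp hx))

private lemma prod_X_pow_eq {n : ℕ} {R : Type*} [CommRing R] (a : Fin n → ℕ) :
    (∏ j, (X j : MvPolynomial (Fin n) R) ^ a j) =
      monomial (Finsupp.equivFunOnFinite.symm a) 1 := by
  rw [← MvPolynomial.prod_X_pow_eq_monomial]
  exact (Finset.prod_subset (Finset.subset_univ _)
    (fun x _ hx => by
      have : a x = 0 := Finsupp.notMem_support_iff.mp hx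
      rw [this, pow_zero])).symm

private lemma perm_prod {n : ℕ} {R : Type*} [CommRing R] (π : Equiv.Perm (Fin n)) :
    (∏ i, (X (π i) : MvPolynomial (Fin n) R) ^ (i : ℕ)) =
      monomial (Finsupp.equivFunOnFinite.symm fun j => ((π.symm j : Fin n) : ℕ)) 1 := by
  rw [← prod_X_pow_eq]
  exact Fintype.prod_equiv π (fun i => X (π i) ^ (i : ℕ))
    (fun j => X j ^ ((π.symm j : Fin n) : ℕ))
    (fun i => by simp)

private def conjRev {n : ℕ} (σ : Equiv.Perm (Fin n)) : Equiv.Perm (Fin n) :=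
  (Fin.revPerm.trans σ).trans Fin.revPerm

private lemma sign_conjRev {n : ℕ} (σ : Equiv.Perm (Fin n)) :
    Equiv.Perm.sign (conjRev σ) = Equiv.Perm.sign σ := by
  have h : conjRev σ = Fin.revPerm * σ * Fin.revPerm := rfl
  rw [h, map_mul, map_mul]
  rcases Int.units_eq_one_or (Equiv.Perm.sign (Fin.revPerm (n := n))) with h1 | h1 <;>
    simp [h1]

private lemma coeff_VW {n : ℕ} {R : Type*} [CommRing R] :
    MvPolynomial.coeff (Finsupp.equivFunOnFinite.symm fun _ : Fin n => n - 1)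
      ((Matrix.vandermonde (X : Fin n → MvPolynomial (Fin n) R)).det *
        (Matrix.vandermonde (fun i => (X (Fin.rev i) : MvPolynomial (Fin n) R))).det) =
      (n.factorial : R) := by
  classical
  rw [Matrix.det_apply, Matrix.det_apply, Finset.sum_mul_sum]
  simp only [MvPolynomial.coeff_sum]
  have hterm : ∀ σ τ : Equiv.Perm (Fin n),
      MvPolynomial.coeff (Finsupp.equivFunOnFinite.symm fun _ : Fin n => n - 1)
        ((Equiv.Perm.sign σ • ∏ i, Matrix.vandermonde (X : Fin n → MvPolynomial (Fin n) R) (σ i) i) *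
         (Equiv.Perm.sign τ • ∏ i, Matrix.vandermonde (fun i => (X (Fin.rev i) : MvPolynomial (Fin n) R)) (τ i) i)) =
      if τ = conjRev σ
        then ((Equiv.Perm.sign σ : ℤ) : R) * ((Equiv.Perm.sign τ : ℤ) : R) else 0 := by
    intro σ τ
    have hP : (∏ i, Matrix.vandermonde (X : Fin n → MvPolynomial (Fin n) R) (σ i) i)
        = monomial (Finsupp.equivFunOnFinite.symm fun j => ((σ.symm j : Fin n) : ℕ)) 1 := by
      simp only [Matrix.vandermonde_apply]
      exact perm_prod σ
    have hQ : (∏ i, Matrix.vandermonde (fun i => (X (Fin.rev i) : MvPolynomial (Fin n) R)) (τ i) i)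
        = monomial (Finsupp.equivFunOnFinite.symm
            fun j => (((τ.trans Fin.revPerm).symm j : Fin n) : ℕ)) 1 := by
      simp only [Matrix.vandermonde_apply]
      exact perm_prod (τ.trans Fin.revPerm)
    rw [Units.smul_def, Units.smul_def, smul_mul_smul_comm, MvPolynomial.coeff_smul,
      hP, hQ, monomial_mul, MvPolynomial.coeff_monomial]
    have hcond : (Finsupp.equivFunOnFinite.symm fun j => ((σ.symm j : Fin n) : ℕ)) +
          (Finsupp.equivFunOnFinite.symm fun j => (((τ.trans Fin.revPerm).symm j : Fin n) : ℕ)) =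
          (Finsupp.equivFunOnFinite.symm fun _ : Fin n => n - 1) ↔ τ = conjRev σ := by
      rw [Finsupp.ext_iff]
      constructor
      · intro h
        have hsymm : τ.symm = (conjRev σ).symm := by
          apply Equiv.ext
          intro j
          have hj := h (Fin.rev j)
          simp only [Finsupp.add_apply, Finsupp.coe_equivFunOnFinite_symm,
            Equiv.symm_trans_apply, Fin.revPerm_symm, Fin.revPerm_apply, Fin.rev_rev] at hj
          have h1 : ((σ.symm (Fin.rev j) : Fin n) : ℕ) < n := Fin.is_lt _
          have h2 : ((τ.symm j : Fin n) : ℕ) < n := Fin.is_lt _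
          have : (conjRev σ).symm j = Fin.rev (σ.symm (Fin.rev j)) := rfl
          rw [this]
          apply Fin.ext
          rw [Fin.val_rev]
          omega
        calc τ = τ.symm.symm := (Equiv.symm_symm τ).symm
        _ = (conjRev σ).symm.symm := by rw [hsymm]
        _ = conjRev σ := Equiv.symm_symm _
      · rintro rfl j
        have : (conjRev σ).symm = (Fin.revPerm.trans σ.symm).trans Fin.revPerm := rfl
        simp only [Finsupp.add_apply, Finsupp.coe_equivFunOnFinite_symm, this,
          Equiv.symm_trans_apply, Fin.revPerm_symm, Fin.revPerm_apply, Equiv.trans_apply,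
          Fin.rev_rev]
        have h1 : ((σ.symm j : Fin n) : ℕ) < n := Fin.is_lt _
        rw [Fin.val_rev]
        omega
    rw [if_congr hcond rfl rfl]
    split
    · simp [zsmul_eq_mul]
    · rw [smul_zero]
  simp only [hterm]
  have hκ : ∀ σ : Equiv.Perm (Fin n),
      (∑ τ : Equiv.Perm (Fin n), if τ = conjRev σ
        then ((Equiv.Perm.sign σ : ℤ) : R) * ((Equiv.Perm.sign τ : ℤ) : R) else 0) = 1 := by
    intro σ
    rw [Finset.sum_ite_eq' univ (conjRev σ)
      (fun τ => ((Equiv.Perm.sign σ : ℤ) : R) * ((Equiv.Perm.sign τ : ℤ) : R))]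
    rw [if_pos (Finset.mem_univ _), sign_conjRev, ← Int.cast_mul, ← Units.val_mul,
      Int.units_mul_self, Units.val_one, Int.cast_one]
  simp only [hκ]
  simp [Fintype.card_perm]


private lemma constCoeff_aeval {n : ℕ} {R : Type*} [CommRing R] (w : R)
    (p : MvPolynomial (Fin n) R) :
    MvPolynomial.coeff 0 (MvPolynomial.aeval (fun j : Fin n => MvPolynomial.C w + X j) p) =
      MvPolynomial.eval (fun _ : Fin n => w) p := by
  have hcc : ∀ q : MvPolynomial (Fin n) R, MvPolynomial.coeff 0 q = MvPolynomial.constantCoeff q :=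
    fun q => rfl
  rw [hcc]
  induction p using MvPolynomial.induction_on with
  | C a => simp
  | add p q hp hq =>
      simp only [MvPolynomial.aeval_eq_bind₁] at hp hq
      simp [hp, hq]
  | mul_X p i hp =>
      simp only [MvPolynomial.aeval_eq_bind₁] at hp
      simp [hp]

private lemma coeff_disc {n : ℕ} {R : Type*} [CommRing R] :
    MvPolynomial.coeff (Finsupp.equivFunOnFinite.symm fun _ : Fin n => n - 1)
      (∏ j : Fin n, ∏ k ∈ Ioi j, ((X k : MvPolynomial (Fin n) R) - X j) ^ 2) =
      (-1 : R) ^ (n * (n - 1) / 2) * (n.factorial : R) := by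
  classical
  have hsum : ∑ j : Fin n, (Ioi j).card = n * (n - 1) / 2 := by
    have h1 : ∀ j : Fin n, (Ioi j).card = n - 1 - (j : ℕ) := fun j => Fin.card_Ioi j
    simp only [h1]
    rw [Fin.sum_univ_eq_sum_range (fun i => n - 1 - i) n,
      Finset.sum_range_reflect (fun i => i) n]
    exact Finset.sum_range_id n
  have hW : (∏ j : Fin n, ∏ k ∈ Ioi j, ((X j : MvPolynomial (Fin n) R) - X k)) =
      (Matrix.vandermonde (fun i => (X (Fin.rev i) : MvPolynomial (Fin n) R))).det := by
    rw [Matrix.det_vandermonde]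
    rw [Finset.prod_sigma', Finset.prod_sigma']
    refine Finset.prod_nbij' (fun p => ⟨Fin.rev p.2, Fin.rev p.1⟩)
      (fun p => ⟨Fin.rev p.2, Fin.rev p.1⟩) ?_ ?_ ?_ ?_ ?_
    · rintro ⟨a, b⟩ hab
      simp only [Finset.mem_sigma, Finset.mem_univ, Finset.mem_Ioi, true_and] at hab ⊢
      exact Fin.rev_lt_rev.mpr hab
    · rintro ⟨a, b⟩ hab
      simp only [Finset.mem_sigma, Finset.mem_univ, Finset.mem_Ioi, true_and] at hab ⊢
      exact Fin.rev_lt_rev.mpr hab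
    · rintro ⟨a, b⟩ _; simp
    · rintro ⟨a, b⟩ _; simp
    · rintro ⟨a, b⟩ _; simp
  have hfact : (∏ j : Fin n, ∏ k ∈ Ioi j, ((X k : MvPolynomial (Fin n) R) - X j)) *
      (∏ j : Fin n, ∏ k ∈ Ioi j, ((X j : MvPolynomial (Fin n) R) - X k)) =
      (-1 : MvPolynomial (Fin n) R) ^ (n * (n - 1) / 2) *
        ∏ j : Fin n, ∏ k ∈ Ioi j, ((X k : MvPolynomial (Fin n) R) - X j) ^ 2 := by
    calc (∏ j : Fin n, ∏ k ∈ Ioi j, ((X k : MvPolynomial (Fin n) R) - X j)) *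
        (∏ j : Fin n, ∏ k ∈ Ioi j, ((X j : MvPolynomial (Fin n) R) - X k)) =
        ∏ j : Fin n, ∏ k ∈ Ioi j, (((X k : MvPolynomial (Fin n) R) - X j) * (X j - X k)) := by
          rw [← Finset.prod_mul_distrib]
          exact Finset.prod_congr rfl fun j _ => (Finset.prod_mul_distrib).symm
      _ = ∏ j : Fin n, ∏ k ∈ Ioi j,
            ((-1 : MvPolynomial (Fin n) R) * ((X k : MvPolynomial (Fin n) R) - X j) ^ 2) := by
          refine Finset.prod_congr rfl fun j _ => Finset.prod_congr rfl fun k _ => by ring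
      _ = ∏ j : Fin n, ((-1 : MvPolynomial (Fin n) R) ^ (Ioi j).card *
            ∏ k ∈ Ioi j, ((X k : MvPolynomial (Fin n) R) - X j) ^ 2) := by
          refine Finset.prod_congr rfl fun j _ => ?_
          rw [Finset.prod_mul_distrib, Finset.prod_const]
      _ = (-1 : MvPolynomial (Fin n) R) ^ (∑ j : Fin n, (Ioi j).card) *
            ∏ j : Fin n, ∏ k ∈ Ioi j, ((X k : MvPolynomial (Fin n) R) - X j) ^ 2 := by
          rw [Finset.prod_mul_distrib, Finset.prod_pow_eq_pow_sum]
      _ = _ := by rw [hsum]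
  have hV2 : (∏ j : Fin n, ∏ k ∈ Ioi j, ((X k : MvPolynomial (Fin n) R) - X j) ^ 2) =
      (-1 : MvPolynomial (Fin n) R) ^ (n * (n - 1) / 2) *
        ((∏ j : Fin n, ∏ k ∈ Ioi j, ((X k : MvPolynomial (Fin n) R) - X j)) *
          (∏ j : Fin n, ∏ k ∈ Ioi j, ((X j : MvPolynomial (Fin n) R) - X k))) := by
    rw [hfact, ← mul_assoc, ← mul_pow]
    norm_num
  rw [hV2]
  have hC : ((-1 : MvPolynomial (Fin n) R)) ^ (n * (n - 1) / 2) =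
      MvPolynomial.C ((-1 : R) ^ (n * (n - 1) / 2)) := by
    rw [map_pow, map_neg, map_one]
  rw [hC, MvPolynomial.coeff_C_mul,
    show (∏ j : Fin n, ∏ k ∈ Ioi j, ((X k : MvPolynomial (Fin n) R) - X j)) =
      (Matrix.vandermonde (X : Fin n → MvPolynomial (Fin n) R)).det from
      (Matrix.det_vandermonde X).symm,
    hW, coeff_VW]

/-- Algebraic residue computation (Lemma 2 of Cantini–Colomo–Pronko): for a symmetric
polynomial `Φ`, the coefficient of `ε₁^{s-1}⋯ε_s^{s-1}` in
`∏_{j<k}(ε_k-ε_j)² · Φ(w+ε₁,…,w+ε_s)` equals `(-1)^{s(s-1)/2} s! Φ(w,…,w)`. -/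
theorem stmt2 (s : ℕ) (hs : 1 ≤ s) (R : Type*) [CommRing R] [Algebra ℚ R]
    (Φ : MvPolynomial (Fin s) R) (hΦ : Φ.IsSymmetric) (w : R) :
    MvPolynomial.coeff (Finsupp.equivFunOnFinite.symm fun _ : Fin s => s - 1)
        ((∏ j : Fin s, ∏ k ∈ Ioi j, (X k - X j) ^ 2) *
          (MvPolynomial.aeval (fun j : Fin s => MvPolynomial.C w + X j) Φ)) =
      (-1) ^ (s * (s - 1) / 2) * (s.factorial : R) *
        MvPolynomial.eval (fun _ : Fin s => w) Φ := by
  classical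
  set m : Fin s →₀ ℕ := Finsupp.equivFunOnFinite.symm fun _ : Fin s => s - 1 with hm
  -- counting
  have hsum : ∑ j : Fin s, (Ioi j).card = s * (s - 1) / 2 := by
    have h1 : ∀ j : Fin s, (Ioi j).card = s - 1 - (j : ℕ) := fun j => Fin.card_Ioi j
    simp only [h1]
    rw [Fin.sum_univ_eq_sum_range (fun i => s - 1 - i) s]
    rw [Finset.sum_range_reflect (fun i => i) s]
    exact Finset.sum_range_id s
  have h2sum : ∑ j : Fin s, ∑ _k ∈ Ioi j, 2 = s * (s - 1) := by
    have h1 : ∀ j : Fin s, (∑ _k ∈ Ioi j, 2) = 2 * (Ioi j).card := by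
      intro j; rw [Finset.sum_const, smul_eq_mul, mul_comm]
    simp only [h1]
    rw [← Finset.mul_sum, hsum]
    have heven : (∑ i ∈ range s, i) * 2 = s * (s - 1) := Finset.sum_range_id_mul_two s
    rw [← Finset.sum_range_id s, ← heven]
    ring
  -- homogeneity
  have hhom : (∏ j : Fin s, ∏ k ∈ Ioi j, ((X k : MvPolynomial (Fin s) R) - X j) ^ 2).IsHomogeneous
      (s * (s - 1)) := by
    rw [← h2sum]
    exact MvPolynomial.IsHomogeneous.prod _ _ _ (fun j _ =>
      MvPolynomial.IsHomogeneous.prod _ _ _ (fun k _ => by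
        have := ((MvPolynomial.isHomogeneous_X R k).sub (MvPolynomial.isHomogeneous_X R j)).pow 2
        simpa using this))
  have hdegm : m.degree = s * (s - 1) := by
    rw [degree_univ]
    simp [hm, Finsupp.coe_equivFunOnFinite_symm, Finset.sum_const, card_univ,
      smul_eq_mul, Nat.mul_comm]
  -- splitting off the constant term
  have hsplit : MvPolynomial.coeff m
      ((∏ j : Fin s, ∏ k ∈ Ioi j, ((X k : MvPolynomial (Fin s) R) - X j) ^ 2) *
        (MvPolynomial.aeval (fun j : Fin s => MvPolynomial.C w + X j) Φ)) =
      MvPolynomial.coeff m (∏ j : Fin s, ∏ k ∈ Ioi j, ((X k : MvPolynomial (Fin s) R) - X j) ^ 2) *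
        MvPolynomial.coeff 0 (MvPolynomial.aeval (fun j : Fin s => MvPolynomial.C w + X j) Φ) := by
    rw [MvPolynomial.coeff_mul]
    rw [Finset.sum_eq_single (m, 0)]
    · intro b hb hne
      rw [Finset.HasAntidiagonal.mem_antidiagonal] at hb
      have hb2 : b.2 ≠ 0 := by
        rintro h0
        apply hne
        have : b.1 = m := by rw [← hb, h0, add_zero]
        rw [← this, ← h0]
      have hdeg : b.1.degree ≠ s * (s - 1) := by
        have hadd : b.1.degree + b.2.degree = s * (s - 1) := by
          rw [degree_univ, degree_univ, ← Finset.sum_add_distrib]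
          have : ∀ i, b.1 i + b.2 i = m i := fun i => by
            rw [← Finsupp.add_apply, hb]
          simp only [this]
          rw [← degree_univ, hdegm]
        have hq : b.2.degree ≠ 0 := by
          rwa [Ne, Finsupp.degree_eq_zero_iff]
        omega
      rw [hhom.coeff_eq_zero hdeg, zero_mul]
    · intro h
      exact absurd (Finset.HasAntidiagonal.mem_antidiagonal.mpr (by simp)) h
  rw [hsplit, constCoeff_aeval, coeff_disc]
end

section
/- Let s ≥ 1 and let t, z₁,…,z_s be elements of a field (or indeterminates over ℚ). For 1 ≤ k ≤ s define the polynomial P_k(z) = (1−z)^{s−k} · (z^k − ((1+t²)z − 1)^k)/(1 − t²z), where the division is exact (i.e., (1 − t²z) divides z^k − ((1+t²)z − 1)^k in ℚ[t][z]). Then det_{1≤j,k≤s} [P_k(z_j)] = (∏_{j=1}^{s} (1 + t² + ⋯ + t^{2(j−1)})) · ∏_{1≤j<k≤s} (z_k − z_j). -/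
/-!
With `w = 1 - z`, the `k`-th column is `w ^ (s-1-k) * q_k(w)` where `q_k(w) = Q_k(1 - w)`
and `Q_k = (z^(k+1) - ((1+t²)z - 1)^(k+1)) / (1 - t²z)` has degree `≤ k`. Expanding `q_k` in
powers of `w` factors the matrix as the projective Vandermonde matrix `(w_j ^ (s-1-m))` times
an upper triangular matrix with diagonal `q_k(0) = Q_k(1) = 1 + t² + ⋯ + t^(2k)`, and the
projective Vandermonde determinant is `∏_{i<j} (w_i - w_j) = ∏_{i<j} (z_j - z_i)`.
-/

open Finset Polynomial

namespace Matrix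

variable {R : Type*} [CommRing R] {n : ℕ}

theorem of_eval_eq_projVandermonde_mul (w : Fin n → R) (r : Fin n → R[X])
    (hr : ∀ k, (r k).natDegree < n) :
    of (fun j k => (r k).eval (w j)) = projVandermonde 1 w * of fun m k => (r k).coeff m.rev := by
  ext j k
  rw [of_apply, eval_eq_sum_range' (hr k),
    ← Fin.sum_univ_eq_sum_range (fun m => (r k).coeff m * w j ^ m), mul_apply,
    ← Equiv.sum_comp Fin.revPerm]
  simp [projVandermonde_apply, mul_comm]

theorem det_of_pow_rev_mul_eval (w : Fin n → R) (q : Fin n → R[X])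
    (hq : ∀ k, (q k).natDegree ≤ k) :
    det (of fun j k : Fin n => w j ^ (k.rev : ℕ) * (q k).eval (w j)) =
      (∏ k, (q k).coeff 0) * ∏ i, ∏ j ∈ Ioi i, (w i - w j) := by
  have hdeg : ∀ k : Fin n, (X ^ (k.rev : ℕ) * q k).natDegree < n := fun k =>
    calc (X ^ (k.rev : ℕ) * q k).natDegree ≤ (k.rev : ℕ) + k :=
          natDegree_mul_le.trans (add_le_add (natDegree_X_pow_le _) (hq k))
      _ < n := by simp only [Fin.val_rev]; omega
  have hmul := of_eval_eq_projVandermonde_mul w _ hdeg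
  simp only [eval_mul, eval_pow, eval_X] at hmul
  rw [hmul, det_mul, det_projVandermonde, mul_comm, det_of_isUpperTriangular]
  · simp [coeff_X_pow_mul']
  · intro m k hkm
    simp only [of_apply, coeff_X_pow_mul']
    rw [if_neg (by simp only [Fin.val_rev, id] at hkm ⊢; omega)]

end Matrix

section GeomQuotient

variable {R : Type*} [CommRing R]

/-- The exact quotient `(X^n - (aX - 1)^n) / (X - (aX - 1))`. -/
noncomputable def geomQuotient (a : R) (n : ℕ) : R[X] :=
  ∑ i ∈ range n, X ^ i * (C a * X - 1) ^ (n - 1 - i)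

theorem eval_geomQuotient (a x : R) (n : ℕ) :
    (geomQuotient a n).eval x = ∑ i ∈ range n, x ^ i * (a * x - 1) ^ (n - 1 - i) := by
  simp [geomQuotient, eval_finsetSum]

theorem natDegree_geomQuotient_le (a : R) (n : ℕ) : (geomQuotient a n).natDegree ≤ n - 1 := by
  refine natDegree_sum_le_of_forall_le _ _ fun i hi => ?_
  have hlin : (C a * X - 1 : R[X]).natDegree ≤ 1 := by compute_degree
  calc (X ^ i * (C a * X - 1) ^ (n - 1 - i)).natDegree ≤ i + (n - 1 - i) * 1 :=
        natDegree_mul_le.trans (add_le_add (natDegree_X_pow_le _) (natDegree_pow_le_of_le _ hlin))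
    _ = n - 1 := by simp only [mem_range] at hi; omega

end GeomQuotient

theorem stmt3_general (s : ℕ) (F : Type*) [Field F] (t : F) (z : Fin s → F)
    (h : ∀ j, 1 - t ^ 2 * z j ≠ 0) :
    Matrix.det (Matrix.of fun j k : Fin s =>
        (1 - z j) ^ (s - (k.val + 1)) *
          ((z j ^ (k.val + 1) - ((1 + t ^ 2) * z j - 1) ^ (k.val + 1)) / (1 - t ^ 2 * z j))) =
      (∏ j : Fin s, ∑ i ∈ range (j.val + 1), t ^ (2 * i)) *
        ∏ j : Fin s, ∏ k ∈ Ioi j, (z k - z j) := by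
  let q : Fin s → F[X] := fun k => (geomQuotient (1 + t ^ 2) (k + 1)).comp (1 - X)
  have hquot (j : Fin s) (n : ℕ) :
      (z j ^ n - ((1 + t ^ 2) * z j - 1) ^ n) / (1 - t ^ 2 * z j) =
        (geomQuotient (1 + t ^ 2) n).eval (z j) := by
    rw [div_eq_iff (h j), eval_geomQuotient, ← geom_sum₂_mul]
    ring
  have hq_eval (j k : Fin s) :
      (q k).eval (1 - z j) = (geomQuotient (1 + t ^ 2) (k + 1)).eval (z j) := by
    simp [q, eval_comp]
  have hq_deg (k : Fin s) : (q k).natDegree ≤ k :=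
    calc (q k).natDegree
        ≤ (geomQuotient (1 + t ^ 2) (k + 1)).natDegree * (1 - X : F[X]).natDegree :=
          natDegree_comp_le
      _ ≤ k * 1 := Nat.mul_le_mul (natDegree_geomQuotient_le _ _) (by compute_degree)
      _ = k := mul_one _
  have hq_coeff (k : Fin s) : (q k).coeff 0 = ∑ i ∈ range (k + 1), t ^ (2 * i) := by
    rw [coeff_zero_eq_eval_zero, eval_comp]
    simp only [eval_sub, eval_one, eval_X, sub_zero, eval_geomQuotient, mul_one,
      add_sub_cancel_left, geom_sum₂_comm (1 : F), geom_sum₂_with_one, pow_mul]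
  simp only [hquot, ← hq_eval, ← Fin.val_rev]
  rw [Matrix.det_of_pow_rev_mul_eval _ _ hq_deg]
  simp only [hq_coeff, sub_sub_sub_cancel_left]

/-- Determinant evaluation: with `P_k(z) = (1-z)^{s-k}(z^k - ((1+t²)z-1)^k)/(1-t²z)`,
`det[P_k(z_j)] = ∏_{j=1}^s (1 + t² + ⋯ + t^{2(j-1)}) · ∏_{j<k}(z_k - z_j)`. -/
theorem stmt3 (s : ℕ) (hs : 1 ≤ s) (F : Type*) [Field F] (t : F) (z : Fin s → F)
    (h : ∀ j, 1 - t ^ 2 * z j ≠ 0) :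
    Matrix.det (Matrix.of fun j k : Fin s =>
        (1 - z j) ^ (s - (k.val + 1)) *
          ((z j ^ (k.val + 1) - ((1 + t ^ 2) * z j - 1) ^ (k.val + 1)) / (1 - t ^ 2 * z j))) =
      (∏ j : Fin s, ∑ i ∈ range (j.val + 1), t ^ (2 * i)) *
        ∏ j : Fin s, ∏ k ∈ Ioi j, (z k - z j) :=
  stmt3_general s F t z h
end

section
/- For s = 2 and indeterminates τ, x₁, x₂, y₁, y₂, the following identity of rational functions holds: ∑ over the four pairs (σ,ρ) ∈ S₂×S₂ of sgn(σ)sgn(ρ) · (x_{σ(1)}y_{ρ(1)}) / ((1 − x_{σ(1)}y_{ρ(1)})(1 − x_{σ(1)}x_{σ(2)}y_{ρ(1)}y_{ρ(2)})) · (x_{σ(1)}x_{σ(2)} + τ x_{σ(2)} + 1)(y_{ρ(1)}y_{ρ(2)} + τ y_{ρ(2)} + 1) equals ∏_{j,k=1}^{2} (x_j + y_k + τ x_j y_k) · ( ψ(x₁,y₁)ψ(x₂,y₂) − ψ(x₁,y₂)ψ(x₂,y₁) ), where ψ(x,y) = 1/((1 − xy)(x + y + τxy)). -/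
/-!
Put `w(x, y) = x + y + τxy`. The four terms on the left pair up as `(σ, ρ)` and
`(σ ∘ s, ρ ∘ s)`, `s` the transposition. Each pair sums to
`w(x_{σ1}, y_{ρ2}) w(x_{σ2}, y_{ρ1}) / ((1 - x_{σ1}y_{ρ1})(1 - x_{σ2}y_{ρ2}))` plus a remainder over
`1 - x₁x₂y₁y₂` that is symmetric in `x₁, x₂`, so the remainders cancel in the alternating sum.
On the right, the factors `w` cancel against the product, leaving the same two fractions.
-/

section

variable {F : Type*} [Field F]

theorem prod_mul_sub_inv_eq_sub_div (w₁₁ w₁₂ w₂₁ w₂₂ d₁₁ d₁₂ d₂₁ d₂₂ : F)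
    (hw₁₁ : w₁₁ ≠ 0) (hw₁₂ : w₁₂ ≠ 0) (hw₂₁ : w₂₁ ≠ 0) (hw₂₂ : w₂₂ ≠ 0) :
    w₁₁ * w₁₂ * w₂₁ * w₂₂ * ((d₁₁ * w₁₁)⁻¹ * (d₂₂ * w₂₂)⁻¹ - (d₁₂ * w₁₂)⁻¹ * (d₂₁ * w₂₁)⁻¹) =
      w₁₂ * w₂₁ / (d₁₁ * d₂₂) - w₁₁ * w₂₂ / (d₁₂ * d₂₁) := by
  simp only [mul_inv, div_eq_mul_inv]
  field_simp

theorem swap_pair_add_eq (τ a b c d : F) (hac : 1 - a * c ≠ 0) (hbd : 1 - b * d ≠ 0)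
    (habcd : 1 - a * b * c * d ≠ 0) :
    a * c / ((1 - a * c) * (1 - a * b * c * d)) * ((a * b + τ * b + 1) * (c * d + τ * d + 1)) +
      b * d / ((1 - b * d) * (1 - a * b * c * d)) * ((b * a + τ * a + 1) * (d * c + τ * c + 1)) =
      (a + d + τ * a * d) * (b + c + τ * b * c) / ((1 - a * c) * (1 - b * d)) +
        (τ ^ 2 * (a * b * c * d) - a * b - c * d - 2 * (a * b * c * d)) / (1 - a * b * c * d) := by
  rw [div_mul_eq_mul_div, div_mul_eq_mul_div, div_add_div _ _ (by positivity) (by positivity),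
    div_add_div _ _ (by positivity) habcd, div_eq_div_iff (by positivity) (by positivity)]
  ring

end

/-- The `s = 2` case of the double antisymmetrization identity of
Cantini–Colomo–Pronko, with `ψ(x,y) = 1/((1-xy)(x+y+τxy))`. -/
theorem stmt7 (F : Type*) [Field F] (τ x₁ x₂ y₁ y₂ : F)
    (h11 : 1 - x₁ * y₁ ≠ 0) (h12 : 1 - x₁ * y₂ ≠ 0)
    (h21 : 1 - x₂ * y₁ ≠ 0) (h22 : 1 - x₂ * y₂ ≠ 0)
    (hp : 1 - x₁ * x₂ * y₁ * y₂ ≠ 0)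
    (g11 : x₁ + y₁ + τ * x₁ * y₁ ≠ 0) (g12 : x₁ + y₂ + τ * x₁ * y₂ ≠ 0)
    (g21 : x₂ + y₁ + τ * x₂ * y₁ ≠ 0) (g22 : x₂ + y₂ + τ * x₂ * y₂ ≠ 0) :
    x₁ * y₁ / ((1 - x₁ * y₁) * (1 - x₁ * x₂ * y₁ * y₂)) *
        ((x₁ * x₂ + τ * x₂ + 1) * (y₁ * y₂ + τ * y₂ + 1)) -
      x₂ * y₁ / ((1 - x₂ * y₁) * (1 - x₁ * x₂ * y₁ * y₂)) *
        ((x₂ * x₁ + τ * x₁ + 1) * (y₁ * y₂ + τ * y₂ + 1)) -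
      x₁ * y₂ / ((1 - x₁ * y₂) * (1 - x₁ * x₂ * y₁ * y₂)) *
        ((x₁ * x₂ + τ * x₂ + 1) * (y₂ * y₁ + τ * y₁ + 1)) +
      x₂ * y₂ / ((1 - x₂ * y₂) * (1 - x₁ * x₂ * y₁ * y₂)) *
        ((x₂ * x₁ + τ * x₁ + 1) * (y₂ * y₁ + τ * y₁ + 1)) =
      ((x₁ + y₁ + τ * x₁ * y₁) * (x₁ + y₂ + τ * x₁ * y₂) *
        (x₂ + y₁ + τ * x₂ * y₁) * (x₂ + y₂ + τ * x₂ * y₂)) *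
        (((1 - x₁ * y₁) * (x₁ + y₁ + τ * x₁ * y₁))⁻¹ *
            ((1 - x₂ * y₂) * (x₂ + y₂ + τ * x₂ * y₂))⁻¹ -
          ((1 - x₁ * y₂) * (x₁ + y₂ + τ * x₁ * y₂))⁻¹ *
            ((1 - x₂ * y₁) * (x₂ + y₁ + τ * x₂ * y₁))⁻¹) := by
  have hA := swap_pair_add_eq τ x₁ x₂ y₁ y₂ h11 h22 hp
  have hB := swap_pair_add_eq τ x₂ x₁ y₁ y₂ h21 h12 (by rwa [mul_comm x₂ x₁])
  rw [prod_mul_sub_inv_eq_sub_div _ _ _ _ _ _ _ _ g11 g12 g21 g22]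
  linear_combination hA - hB
end

section
/- Let s ≥ 2 and let f₁,…,f_s : ℂ → ℂ be functions with f₁(1) = 1, and let z₁,…,z_s be pairwise distinct complex numbers. Define G(z₁,…,z_s) = (∏_{1≤j<k≤s}(z_k − z_j))^{−1} · det_{1≤j,k≤s}[ z_k^{s−j}(z_k − 1)^{j−1} f_j(z_k) ]. If z_s = 1 and z₁,…,z_{s−1} ≠ 1, then G(z₁,…,z_{s−1}, 1) = (∏_{1≤j<k≤s−1}(z_k − z_j))^{−1} · det_{1≤j,k≤s−1}[ z_k^{(s−1)−j}(z_k − 1)^{j−1} f_{j+1}(z_k) ]. -/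
open Finset

private lemma auxIoi (n : ℕ) (j : Fin n) :
    (Ioi j.castSucc : Finset (Fin (n+1))) = insert (Fin.last n) ((Ioi j).image Fin.castSucc) := by
  ext k
  simp only [mem_Ioi, mem_insert, mem_image, Fin.lt_def, Fin.coe_castSucc]
  constructor
  · intro h
    by_cases hk : k.val = n
    · left; exact Fin.ext hk
    · right; exact ⟨⟨k.val, by omega⟩, h, Fin.ext rfl⟩
  · rintro (rfl | ⟨k', hk', rfl⟩)
    · simpa using j.isLt
    · simpa using hk'

private lemma auxProd (n : ℕ) (g : Fin (n+1) → Fin (n+1) → ℂ) :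
    ∏ j : Fin (n+1), ∏ k ∈ Ioi j, g j k
      = (∏ j : Fin n, ∏ k ∈ Ioi j, g j.castSucc k.castSucc) *
        ∏ j : Fin n, g j.castSucc (Fin.last n) := by
  rw [Fin.prod_univ_castSucc]
  have h1 : (Ioi (Fin.last n) : Finset (Fin (n+1))) = ∅ := by
    ext k; simp [Fin.lt_def, Nat.not_lt.mpr (Nat.le_of_lt_succ k.isLt)]
  rw [h1, Finset.prod_empty, mul_one, ← Finset.prod_mul_distrib]
  refine Finset.prod_congr rfl fun j _ => ?_
  rw [auxIoi, Finset.prod_insert (by simp [Fin.ext_iff]),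
    Finset.prod_image (by intro a _ b _ h; exact Fin.castSucc_injective n h)]
  ring

private lemma auxDet (n : ℕ) (f : Fin (n+1) → ℂ → ℂ) (hf : f ⟨0, by omega⟩ 1 = 1)
    (z : Fin (n+1) → ℂ) (hlast : z ⟨n, by omega⟩ = 1) :
    Matrix.det (Matrix.of fun j k : Fin (n+1) =>
          z k ^ (n + 1 - (j.val + 1)) * (z k - 1) ^ j.val * f j (z k)) =
      (-1:ℂ)^n * ((∏ k : Fin n, (z k.castSucc - 1)) *
        Matrix.det (Matrix.of fun j k : Fin n =>
          z ⟨k.val, by omega⟩ ^ (n - (j.val + 1)) * (z ⟨k.val, by omega⟩ - 1) ^ j.val *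
            f ⟨j.val + 1, by omega⟩ (z ⟨k.val, by omega⟩))) := by
  have hlast' : z (Fin.last n) = 1 := hlast
  have hf' : f 0 1 = 1 := hf
  rw [Matrix.det_succ_column _ (Fin.last n)]
  rw [Finset.sum_eq_single (0 : Fin (n+1))]
  · have h0 : ((Matrix.of fun j k : Fin (n+1) =>
        z k ^ (n + 1 - (j.val + 1)) * (z k - 1) ^ j.val * f j (z k)) : Matrix _ _ ℂ)
          0 (Fin.last n) = 1 := by
      simp [hlast', hf']
    rw [h0]
    have hsub : ((Matrix.of fun j k : Fin (n+1) =>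
        z k ^ (n + 1 - (j.val + 1)) * (z k - 1) ^ j.val * f j (z k)) : Matrix _ _ ℂ).submatrix
          (Fin.succAbove 0) (Fin.succAbove (Fin.last n)) =
        Matrix.of (fun i k : Fin n => (z k.castSucc - 1) *
          (z ⟨k.val, by omega⟩ ^ (n - (i.val + 1)) * (z ⟨k.val, by omega⟩ - 1) ^ i.val *
            f ⟨i.val + 1, by omega⟩ (z ⟨k.val, by omega⟩))) := by
      ext i k
      have he : n + 1 - (i.val + 1 + 1) = n - (i.val + 1) := by omega
      simp only [Matrix.submatrix_apply, Matrix.of_apply, Fin.succAbove_zero,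
        Fin.succAbove_last, Fin.val_succ, he]
      rw [show (⟨k.val, k.isLt.trans (Nat.lt_succ_self n)⟩ : Fin (n+1)) = k.castSucc from rfl,
        show (⟨i.val + 1, by omega⟩ : Fin (n+1)) = i.succ from rfl]
      ring
    have hm := Matrix.det_mul_row (fun k : Fin n => z k.castSucc - 1) (Matrix.of fun i k : Fin n =>
      z ⟨k.val, by omega⟩ ^ (n - (i.val + 1)) * (z ⟨k.val, by omega⟩ - 1) ^ i.val *
        f ⟨i.val + 1, by omega⟩ (z ⟨k.val, by omega⟩))
    simp only [Matrix.of_apply] at hm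
    rw [hsub, hm]
    simp only [Fin.val_zero, Fin.val_last, zero_add, mul_one]
  · intro i _ hi
    have : (z (Fin.last n) - 1) ^ i.val = 0 := by
      rw [hlast', sub_self]
      exact zero_pow (Fin.val_ne_zero_iff.mpr hi)
    simp [this]
  · simp

/-- Reduction relation for the determinantal functions
`G(z₁,…,z_s) = ∏_{j<k}(z_k-z_j)⁻¹ · det[z_k^{s-j}(z_k-1)^{j-1} f_j(z_k)]`:
setting `z_s = 1` reduces `G` to the analogous `(s-1)`-variable function built
from `f₂,…,f_s`, provided `f₁(1) = 1`. -/
theorem stmt9 (s : ℕ) (hs : 2 ≤ s) (f : Fin s → ℂ → ℂ) (hf : f ⟨0, by omega⟩ 1 = 1)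
    (z : Fin s → ℂ) (hz : Function.Injective z)
    (hlast : z ⟨s - 1, by omega⟩ = 1)
    (hne : ∀ j : Fin s, j.val < s - 1 → z j ≠ 1) :
    (∏ j : Fin s, ∏ k ∈ Ioi j, (z k - z j))⁻¹ *
        Matrix.det (Matrix.of fun j k : Fin s =>
          z k ^ (s - (j.val + 1)) * (z k - 1) ^ j.val * f j (z k)) =
      (∏ j : Fin (s - 1), ∏ k ∈ Ioi j, (z ⟨k.val, by omega⟩ - z ⟨j.val, by omega⟩))⁻¹ *
        Matrix.det (Matrix.of fun j k : Fin (s - 1) =>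
          z ⟨k.val, by omega⟩ ^ ((s - 1) - (j.val + 1)) * (z ⟨k.val, by omega⟩ - 1) ^ j.val *
            f ⟨j.val + 1, by omega⟩ (z ⟨k.val, by omega⟩)) := by
  obtain ⟨n, rfl⟩ : ∃ n, s = n + 1 := ⟨s - 1, by omega⟩
  simp only [Nat.add_sub_cancel] at hlast hne ⊢
  set R : ℂ := ∏ k : Fin n, (z k.castSucc - 1) with hR
  have hRne : R ≠ 0 := by
    refine Finset.prod_ne_zero_iff.mpr fun k _ => sub_ne_zero.mpr ?_
    exact hne k.castSucc (by simpa using k.isLt)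
  have hc : ((-1:ℂ)^n * R) ≠ 0 := by
    exact mul_ne_zero (pow_ne_zero _ (by norm_num)) hRne
  have hdet := auxDet n f hf z hlast
  rw [hdet]
  have hpre : (∏ j : Fin (n+1), ∏ k ∈ Ioi j, (z k - z j))
      = ((-1:ℂ)^n * R) *
        ∏ j : Fin n, ∏ k ∈ Ioi j,
          (z ⟨k.val, by omega⟩ - z ⟨j.val, by omega⟩) := by
    rw [auxProd n (fun j k => z k - z j)]
    have h2 : ∏ j : Fin n, (z (Fin.last n) - z j.castSucc) = (-1:ℂ)^n * R := by
      have hl : z (Fin.last n) = 1 := hlast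
      calc ∏ j : Fin n, (z (Fin.last n) - z j.castSucc)
          = ∏ j : Fin n, (-1) * (z j.castSucc - 1) := by
            refine Finset.prod_congr rfl fun j _ => by rw [hl]; ring
        _ = (-1:ℂ)^n * R := by
            rw [Finset.prod_mul_distrib, Finset.prod_const, hR]
            simp
    rw [h2]
    rw [show (∏ j : Fin n, ∏ k ∈ Ioi j, (z k.castSucc - z j.castSucc))
        = ∏ j : Fin n, ∏ k ∈ Ioi j,
            (z ⟨k.val, by omega⟩ - z ⟨j.val, by omega⟩) from rfl]
    ring
  rw [hpre, mul_inv]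
  have key : ∀ Q E : ℂ, (((-1:ℂ)^n * R)⁻¹ * Q⁻¹) * ((-1:ℂ)^n * (R * E))
      = (((-1:ℂ)^n * R)⁻¹ * ((-1:ℂ)^n * R)) * (Q⁻¹ * E) := fun Q E => by ring
  rw [key, inv_mul_cancel₀ hc, one_mul]
  rfl
end

section
/- Let s ≥ 1, let t ∈ ℂ with t ≠ 0 and t^{2j} ≠ 1 for 1 ≤ j ≤ s, set τ = −t − t^{−1}, and let z₁,…,z_s be pairwise distinct complex numbers with z_j ≠ 1 and t²z_j ≠ 1 for all j and 1 − t² z_j z_k ≠ 0, etc. (all denominators below nonzero). Define ψ(x,y) = 1/((1 − xy)(x + y + τxy)) and W_s(x₁,…,x_s; y₁,…,y_s) = ∏_{j,k}(x_j + y_k + τ x_j y_k)/(∏_{j<k}(x_k−x_j)(y_k−y_j)) · det[ψ(x_j,y_k)], extended by continuity to coinciding y-variables. Then W_s(t z₁, …, t z_s; t^{−1}, …, t^{−1}) = t^{−s(s−1)} · ∏_{j=1}^{s} ((1 − t^{2j})/(1 − t²)) · ∏_{j=1}^{s} 1/(1 − z_j). -/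
open Finset Polynomial

/-- Iterated derivative of a sum of two simple fractions. -/
lemma aux_iter (A B p q r w : ℂ) (n : ℕ) :
    ∀ y : ℂ, p + q * y ≠ 0 → r + w * y ≠ 0 →
    iteratedDeriv n (fun x => A * (p + q * x)⁻¹ + B * (r + w * x)⁻¹) y =
      A * (-q) ^ n * n.factorial * ((p + q * y)⁻¹) ^ (n + 1) +
      B * (-w) ^ n * n.factorial * ((r + w * y)⁻¹) ^ (n + 1) := by
  induction n with
  | zero => intro y h1 h2; simp [iteratedDeriv_zero]
  | succ n ih =>
    intro y h1 h2
    rw [iteratedDeriv_succ]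
    have hev : iteratedDeriv n (fun x => A * (p + q * x)⁻¹ + B * (r + w * x)⁻¹) =ᶠ[nhds y]
        fun x => A * (-q) ^ n * n.factorial * ((p + q * x)⁻¹) ^ (n + 1) +
          B * (-w) ^ n * n.factorial * ((r + w * x)⁻¹) ^ (n + 1) := by
      have e1 : ∀ᶠ x in nhds y, p + q * x ≠ 0 :=
        ((continuous_const.add (continuous_const.mul continuous_id)).continuousAt).eventually_ne h1
      have e2 : ∀ᶠ x in nhds y, r + w * x ≠ 0 :=
        ((continuous_const.add (continuous_const.mul continuous_id)).continuousAt).eventually_ne h2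
      filter_upwards [e1, e2] with x hx1 hx2
      exact ih x hx1 hx2
    rw [hev.deriv_eq]
    have d1 : HasDerivAt (fun x : ℂ => p + q * x) q y := by
      simpa using ((hasDerivAt_id y).const_mul q).const_add p
    have d2 : HasDerivAt (fun x : ℂ => r + w * x) w y := by
      simpa using ((hasDerivAt_id y).const_mul w).const_add r
    have d1' : HasDerivAt (fun x : ℂ => ((p + q * x)⁻¹) ^ (n + 1))
        ((n + 1 : ℕ) * ((p + q * y)⁻¹) ^ n * (-q / (p + q * y) ^ 2)) y := by
      exact (d1.inv h1).pow (n + 1)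
    have d2' : HasDerivAt (fun x : ℂ => ((r + w * x)⁻¹) ^ (n + 1))
        ((n + 1 : ℕ) * ((r + w * y)⁻¹) ^ n * (-w / (r + w * y) ^ 2)) y := by
      exact (d2.inv h2).pow (n + 1)
    have D := ((d1'.const_mul (A * (-q) ^ n * n.factorial)).add
      (d2'.const_mul (B * (-w) ^ n * n.factorial))).deriv
    erw [D]
    have hq : -q / (p + q * y) ^ 2 = -q * ((p + q * y)⁻¹) ^ 2 := by
      rw [div_eq_mul_inv, inv_pow]
    have hw : -w / (r + w * y) ^ 2 = -w * ((r + w * y)⁻¹) ^ 2 := by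
      rw [div_eq_mul_inv, inv_pow]
    rw [hq, hw]
    push_cast [Nat.factorial_succ]
    ring

/-- Iterated derivative of `1/((1-ax)(b+cx))` via partial fractions. -/
lemma iter_pf (a b c : ℂ) (hD : a * b + c ≠ 0) (n : ℕ) (y : ℂ)
    (h1 : 1 - a * y ≠ 0) (h2 : b + c * y ≠ 0) :
    iteratedDeriv n (fun x => ((1 - a * x) * (b + c * x))⁻¹) y =
      (a * b + c)⁻¹ * n.factorial *
        (a ^ (n + 1) * ((1 - a * y)⁻¹) ^ (n + 1) +
          (-1) ^ n * c ^ (n + 1) * ((b + c * y)⁻¹) ^ (n + 1)) := by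
  have key : iteratedDeriv n (fun x => ((1 - a * x) * (b + c * x))⁻¹) y =
      iteratedDeriv n
        (fun x => (a * (a * b + c)⁻¹) * (1 + -a * x)⁻¹ + (c * (a * b + c)⁻¹) * (b + c * x)⁻¹) y := by
    apply Filter.EventuallyEq.iteratedDeriv_eq
    have e1 : ∀ᶠ x in nhds y, 1 - a * x ≠ 0 :=
      ((continuous_const.sub (continuous_const.mul continuous_id)).continuousAt).eventually_ne h1
    have e2 : ∀ᶠ x in nhds y, b + c * x ≠ 0 :=
      ((continuous_const.add (continuous_const.mul continuous_id)).continuousAt).eventually_ne h2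
    filter_upwards [e1, e2] with x hx1 hx2
    rw [show (1 : ℂ) + -a * x = 1 - a * x by ring]
    field_simp
    linear_combination a * mul_inv_cancel₀ hx2
  rw [key, aux_iter _ _ _ _ _ _ n y (by rw [show (1:ℂ) + -a*y = 1 - a*y by ring]; exact h1) h2]
  rw [show (1 : ℂ) + -a * y = 1 - a * y by ring]
  push_cast
  ring

/-- Confluent evaluation of the Cauchy-like kernel at `x_j = t z_j`, `y_j = t⁻¹`,
with `τ = -t - t⁻¹`:
`W_s(tz₁,…,tz_s; t⁻¹,…,t⁻¹) = t^{-s(s-1)} ∏_{j=1}^s (1-t^{2j})/(1-t²) · ∏_j (1-z_j)⁻¹`,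
where the coinciding-`y` limit of `W_s` is
`∏_j (x_j+y+τx_jy)^s / ∏_{j<k}(x_k-x_j) · det[(1/(k-1)!) ∂_y^{k-1} ψ(x_j,y)]`
and `ψ(x,y) = 1/((1-xy)(x+y+τxy))`. -/
theorem stmt10 (s : ℕ) (hs : 1 ≤ s) (t : ℂ) (ht : t ≠ 0)
    (ht2 : ∀ j : ℕ, 1 ≤ j → j ≤ s → t ^ (2 * j) ≠ 1)
    (z : Fin s → ℂ) (hz : Function.Injective z)
    (hz1 : ∀ j, z j ≠ 1) (hz2 : ∀ j, t ^ 2 * z j ≠ 1)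
    (hz3 : ∀ j k, 1 - t ^ 2 * z j * z k ≠ 0) :
    (∏ j : Fin s, (t * z j + t⁻¹ + (-t - t⁻¹) * (t * z j) * t⁻¹) ^ s) /
        (∏ j : Fin s, ∏ k ∈ Ioi j, (t * z k - t * z j)) *
        Matrix.det (Matrix.of fun j k : Fin s =>
          (1 / (k.val.factorial : ℂ)) *
            iteratedDeriv k.val
              (fun y => ((1 - t * z j * y) * (t * z j + y + (-t - t⁻¹) * (t * z j) * y))⁻¹)
              t⁻¹) =
      (t ^ (s * (s - 1)))⁻¹ * (∏ j : Fin s, (1 - t ^ (2 * (j.val + 1))) / (1 - t ^ 2)) *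
        ∏ j : Fin s, (1 - z j)⁻¹ := by
  have hζ : ∀ j, (1 : ℂ) - z j ≠ 0 := fun j => sub_ne_zero_of_ne (Ne.symm (hz1 j))
  have hDq : ∀ j, ((1 : ℂ) - z j) * (1 - t ^ 2 * z j) ≠ 0 :=
    fun j => mul_ne_zero (hζ j) (sub_ne_zero_of_ne (Ne.symm (hz2 j)))
  set u : Fin s → ℂ := fun j => t * z j * (1 - z j)⁻¹ with hu
  set v : Fin s → ℂ := fun j => t ^ 2 * u j - t with hv
  -- the key entry computation
  have entry : ∀ (j : Fin s) (k : ℕ),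
      (1 / (k.factorial : ℂ)) *
        iteratedDeriv k
          (fun y => ((1 - t * z j * y) * (t * z j + y + (-t - t⁻¹) * (t * z j) * y))⁻¹) t⁻¹
      = ((1 - z j) * (1 - t ^ 2 * z j))⁻¹ * ((u j) ^ (k + 1) - (v j) ^ (k + 1)) := by
    intro j k
    set a : ℂ := t * z j with ha
    set c : ℂ := 1 - (1 + t ^ 2) * z j with hc
    have hfun : (fun y => ((1 - t * z j * y) * (t * z j + y + (-t - t⁻¹) * (t * z j) * y))⁻¹)
        = fun y => ((1 - a * y) * (a + c * y))⁻¹ := by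
      funext y
      congr 2
      field_simp [hc]
      ring
    have hab : a * a + c = (1 - z j) * (1 - t ^ 2 * z j) := by rw [ha, hc]; ring
    have h1 : 1 - a * t⁻¹ = 1 - z j := by
      rw [ha, mul_comm t (z j), mul_assoc, mul_inv_cancel₀ ht, mul_one]
    have h2 : a + c * t⁻¹ = t⁻¹ * (1 - z j) := by
      rw [ha, hc]; field_simp; ring
    rw [hfun, iter_pf a a c (hab ▸ hDq j) k t⁻¹ (h1 ▸ hζ j)
      (h2 ▸ (mul_ne_zero (inv_ne_zero ht) (hζ j))), hab, h1, h2, mul_inv ((1 : ℂ) - z j)]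
    have hvj : v j = -(t * c) * (1 - z j)⁻¹ := by
      rw [hv, hu, hc]; field_simp [hζ j]; ring
    have huj : u j = a * (1 - z j)⁻¹ := by rw [hu, ha]
    have hk : (k.factorial : ℂ) ≠ 0 := Nat.cast_ne_zero.2 k.factorial_ne_zero
    have hY : (t⁻¹ * (1 - z j))⁻¹ = t * (1 - z j)⁻¹ := by rw [mul_inv, inv_inv]
    rw [hvj, huj, hY, mul_pow a, mul_pow (-(t * c)), neg_pow (t * c), mul_pow t c,
      mul_pow t ((1 - z j)⁻¹), pow_succ (-1 : ℂ) k]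
    linear_combination ((1 - z j)⁻¹ * (1 - t ^ 2 * z j)⁻¹ *
      (a ^ (k + 1) * ((1 - z j)⁻¹) ^ (k + 1) +
        (-1) ^ k * c ^ (k + 1) * (t ^ (k + 1) * ((1 - z j)⁻¹) ^ (k + 1)))) *
      (inv_mul_cancel₀ hk)
  -- the polynomials
  set B : Polynomial ℂ := C (t ^ 2) * X - C t with hB
  set P : ℕ → Polynomial ℂ := fun k => ∑ i ∈ Finset.range (k + 1), X ^ i * B ^ (k - i) with hP
  have hBform : B = C (t ^ 2) * X + C (-t) := by rw [hB, C_neg]; ring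
  have ht2ne : (t : ℂ) ^ 2 ≠ 0 := pow_ne_zero 2 ht
  have hPdeg : ∀ k : ℕ, (P k).natDegree ≤ k := by
    intro k
    apply natDegree_sum_le_of_forall_le
    intro i hi
    have hik : i ≤ k := Nat.lt_succ_iff.mp (mem_range.mp hi)
    calc ((X : ℂ[X]) ^ i * B ^ (k - i)).natDegree
        ≤ ((X : ℂ[X]) ^ i).natDegree + (B ^ (k - i)).natDegree := natDegree_mul_le
      _ ≤ i + (k - i) * 1 := by
          gcongr
          · exact le_of_eq (natDegree_X_pow i)
          · refine natDegree_pow_le.trans ?_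
            gcongr
            rw [hBform]
            exact natDegree_linear_le
      _ ≤ k := by omega
  have hBm : ∀ m : ℕ, (B ^ m).coeff m = (t ^ 2) ^ m := by
    intro m
    have h1 : B.natDegree = 1 := by rw [hBform]; exact natDegree_linear ht2ne
    have h2 : (B ^ m).natDegree = m := by rw [Polynomial.natDegree_pow, h1, mul_one]
    have h3 := coeff_natDegree (p := B ^ m)
    rw [h2] at h3
    rw [h3, leadingCoeff_pow]
    congr 1
    rw [hBform]
    exact leadingCoeff_linear ht2ne
  have hPcoeff : ∀ k : ℕ, (P k).coeff k = ∑ i ∈ Finset.range (k + 1), (t ^ 2) ^ i := by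
    intro k
    rw [hP]
    simp only [finset_sum_coeff]
    have step : ∀ i ∈ Finset.range (k + 1),
        ((X : ℂ[X]) ^ i * B ^ (k - i)).coeff k = (t ^ 2) ^ (k - i) := by
      intro i hi
      have hik : i ≤ k := Nat.lt_succ_iff.mp (mem_range.mp hi)
      have hsub : k - i + i = k := by omega
      calc ((X : ℂ[X]) ^ i * B ^ (k - i)).coeff k
          = ((X : ℂ[X]) ^ i * B ^ (k - i)).coeff (k - i + i) := by rw [hsub]
        _ = (t ^ 2) ^ (k - i) := by rw [coeff_X_pow_mul]; exact hBm (k - i)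
    rw [Finset.sum_congr rfl step, ← Finset.sum_range_reflect (fun i => ((t:ℂ) ^ 2) ^ i) (k + 1)]
    apply Finset.sum_congr rfl
    intro i hi
    congr 1
  -- geometric factorization of the matrix entries
  have hfac : ∀ (j : Fin s) (k : ℕ),
      u j ^ (k + 1) - v j ^ (k + 1) = (u j - v j) * (P k).eval (u j) := by
    intro j k
    have he : (P k).eval (u j) = ∑ i ∈ Finset.range (k + 1), u j ^ i * v j ^ (k - i) := by
      rw [hP]
      simp only [eval_finset_sum, eval_mul, eval_pow, eval_sub, eval_X, eval_C, hB, hv]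
    rw [he, ← geom_sum₂_mul (u j) (v j) (k + 1), mul_comm]
    congr 1
  have hMeq : (Matrix.of fun j k : Fin s =>
      (1 / (k.val.factorial : ℂ)) *
        iteratedDeriv k.val
          (fun y => ((1 - t * z j * y) * (t * z j + y + (-t - t⁻¹) * (t * z j) * y))⁻¹)
          t⁻¹)
      = Matrix.of fun j k : Fin s =>
          (((1 - z j) * (1 - t ^ 2 * z j))⁻¹ * (u j - v j)) * (P k.val).eval (u j) := by
    ext j k
    simp only [Matrix.of_apply]
    rw [entry j k.val, hfac j k.val, mul_assoc]
  have hdet1 := Matrix.det_mul_column (fun j => ((1 - z j) * (1 - t ^ 2 * z j))⁻¹ * (u j - v j))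
      (Matrix.of fun j k : Fin s => (P k.val).eval (u j))
  have hdet2 := Matrix.eval_matrixOfPolynomials_eq_vandermonde_mul_matrixOfPolynomials u
      (fun k : Fin s => P k.val) (fun k => hPdeg k.val)
  have hdet3 := Matrix.det_of_upperTriangular
      (Matrix.matrixOfPolynomials_blockTriangular (fun k : Fin s => P k.val) (fun k => hPdeg k.val))
  have hdet : (Matrix.of fun j k : Fin s =>
      (((1 - z j) * (1 - t ^ 2 * z j))⁻¹ * (u j - v j)) * (P k.val).eval (u j)).det
      = (∏ j, (((1 - z j) * (1 - t ^ 2 * z j))⁻¹ * (u j - v j))) *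
        ((∏ j : Fin s, ∏ k ∈ Ioi j, (u k - u j)) * ∏ k : Fin s, (P k.val).coeff k.val) := by
    simp only [Matrix.of_apply] at hdet1
    rw [hdet1, hdet2, Matrix.det_mul, Matrix.det_vandermonde, hdet3]
    simp [Matrix.of_apply]
  rw [hMeq, hdet]
  have hW2 : ∀ j, (1 : ℂ) - t ^ 2 * z j ≠ 0 := fun j => sub_ne_zero_of_ne (Ne.symm (hz2 j))
  -- numerator product
  have hnum : (∏ j : Fin s, (t * z j + t⁻¹ + (-t - t⁻¹) * (t * z j) * t⁻¹) ^ s)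
      = (t⁻¹) ^ (s * s) * ∏ j : Fin s, (1 - z j) ^ s := by
    have h : ∀ j : Fin s, t * z j + t⁻¹ + (-t - t⁻¹) * (t * z j) * t⁻¹ = t⁻¹ * (1 - z j) := by
      intro j; field_simp; ring
    calc (∏ j : Fin s, (t * z j + t⁻¹ + (-t - t⁻¹) * (t * z j) * t⁻¹) ^ s)
        = ∏ j : Fin s, ((t⁻¹) ^ s * (1 - z j) ^ s) := by
          apply Finset.prod_congr rfl; intro j _; rw [h j, mul_pow]
      _ = (t⁻¹) ^ (s * s) * ∏ j : Fin s, (1 - z j) ^ s := by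
          rw [Finset.prod_mul_distrib, Finset.prod_const, Finset.card_univ, Fintype.card_fin,
            ← pow_mul]
  -- the row-scaling product
  have hsc : (∏ j : Fin s, (((1 - z j) * (1 - t ^ 2 * z j))⁻¹ * (u j - v j)))
      = t ^ s * ∏ j : Fin s, ((1 - z j)⁻¹) ^ 2 := by
    have h : ∀ j : Fin s, ((1 - z j) * (1 - t ^ 2 * z j))⁻¹ * (u j - v j)
        = t * ((1 - z j)⁻¹) ^ 2 := by
      intro j
      rw [hv, hu]
      field_simp [hζ j, hW2 j]
      linear_combination mul_inv_cancel₀ (show (1:ℂ) - z j * t ^ 2 ≠ 0 by rw [mul_comm]; exact hW2 j)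
    calc (∏ j : Fin s, (((1 - z j) * (1 - t ^ 2 * z j))⁻¹ * (u j - v j)))
        = ∏ j : Fin s, (t * ((1 - z j)⁻¹) ^ 2) := Finset.prod_congr rfl (fun j _ => h j)
      _ = t ^ s * ∏ j : Fin s, ((1 - z j)⁻¹) ^ 2 := by
          rw [Finset.prod_mul_distrib, Finset.prod_const, Finset.card_univ, Fintype.card_fin]
  -- the Vandermonde product
  have hV : (∏ j : Fin s, ∏ k ∈ Ioi j, (u k - u j))
      = (∏ j : Fin s, ∏ k ∈ Ioi j, (t * z k - t * z j)) *
        ∏ j : Fin s, ∏ k ∈ Ioi j, ((1 - z j)⁻¹ * (1 - z k)⁻¹) := by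
    rw [← Finset.prod_mul_distrib]
    apply Finset.prod_congr rfl
    intro j _
    rw [← Finset.prod_mul_distrib]
    apply Finset.prod_congr rfl
    intro k hk
    rw [hu]
    field_simp [hζ j, hζ k]
    ring
  have hE : (∏ j : Fin s, ∏ k ∈ Ioi j, ((1 - z j)⁻¹ * (1 - z k)⁻¹))
      = ∏ j : Fin s, ((1 - z j)⁻¹) ^ (s - 1) := by
    have e1 : (∏ j : Fin s, ∏ k ∈ Ioi j, ((1 - z j)⁻¹ * (1 - z k)⁻¹))
        = (∏ j : Fin s, ∏ k ∈ Ioi j, (1 - z j)⁻¹) * ∏ j : Fin s, ∏ k ∈ Ioi j, (1 - z k)⁻¹ := by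
      rw [← Finset.prod_mul_distrib]
      exact Finset.prod_congr rfl (fun j _ => Finset.prod_mul_distrib)
    have e2 : (∏ j : Fin s, ∏ k ∈ Ioi j, (1 - z j)⁻¹)
        = ∏ j : Fin s, ((1 - z j)⁻¹) ^ (s - 1 - j.val) := by
      apply Finset.prod_congr rfl
      intro j _
      rw [Finset.prod_const, Fin.card_Ioi]
    have e3 : (∏ j : Fin s, ∏ k ∈ Ioi j, (1 - z k)⁻¹)
        = ∏ k : Fin s, ((1 - z k)⁻¹) ^ (k.val) := by
      rw [Finset.prod_comm' (t' := (univ : Finset (Fin s))) (s' := fun k => Iio k)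
        (by intro x y; simp [mem_Ioi, mem_Iio, and_comm])]
      apply Finset.prod_congr rfl
      intro k _
      rw [Finset.prod_const, Fin.card_Iio]
    rw [e1, e2, e3, ← Finset.prod_mul_distrib]
    apply Finset.prod_congr rfl
    intro j _
    rw [← pow_add]
    congr 1
    have := j.isLt
    omega
  -- the triangular diagonal product
  have h2t : (t : ℂ) ^ 2 ≠ 1 := by
    have := ht2 1 le_rfl hs
    simpa using this
  have hcoeffprod : (∏ k : Fin s, (P k.val).coeff k.val)
      = ∏ j : Fin s, (1 - t ^ (2 * (j.val + 1))) / (1 - t ^ 2) := by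
    apply Finset.prod_congr rfl
    intro k _
    rw [hPcoeff k.val, eq_div_iff (sub_ne_zero_of_ne (Ne.symm h2t)), pow_mul]
    linear_combination (-1 : ℂ) * geom_sum_mul ((t : ℂ) ^ 2) (k.val + 1)
  -- denominator nonzero
  have hDen : (∏ j : Fin s, ∏ k ∈ Ioi j, (t * z k - t * z j)) ≠ 0 := by
    apply Finset.prod_ne_zero_iff.mpr
    intro j _
    apply Finset.prod_ne_zero_iff.mpr
    intro k hk
    have : z k ≠ z j := fun h => absurd (hz h) (Fin.ne_of_gt (mem_Ioi.mp hk))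
    exact sub_ne_zero_of_ne (by exact fun h => this (mul_left_cancel₀ ht h))
  rw [hnum, hsc, hV, hE, hcoeffprod]
  rw [div_mul_eq_mul_div, div_eq_iff hDen]
  -- power and product identities
  have hT : (t⁻¹) ^ (s * s) * t ^ s = (t ^ (s * (s - 1)))⁻¹ := by
    obtain ⟨m, rfl⟩ : ∃ m, s = m + 1 := ⟨s - 1, by omega⟩
    rw [inv_pow, show (m + 1) * (m + 1) = (m + 1) * (m + 1 - 1) + (m + 1) from by
      simp; ring, pow_add, mul_inv, mul_assoc, inv_mul_cancel₀ (pow_ne_zero _ ht), mul_one]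
  have hprod : (∏ j : Fin s, (1 - z j) ^ s) * (∏ j : Fin s, ((1 - z j)⁻¹) ^ 2) *
      (∏ j : Fin s, ((1 - z j)⁻¹) ^ (s - 1)) = ∏ j : Fin s, (1 - z j)⁻¹ := by
    rw [← Finset.prod_mul_distrib, ← Finset.prod_mul_distrib]
    apply Finset.prod_congr rfl
    intro j _
    rw [mul_assoc, ← pow_add, show 2 + (s - 1) = s + 1 from by omega, pow_succ, ← mul_assoc,
      ← mul_pow, mul_inv_cancel₀ (hζ j), one_pow, one_mul]
  linear_combination ((∏ j : Fin s, (1 - z j) ^ s) * (∏ j : Fin s, ((1 - z j)⁻¹) ^ 2) *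
      (∏ j : Fin s, ((1 - z j)⁻¹) ^ (s - 1)) *
      (∏ j : Fin s, (1 - t ^ (2 * (j.val + 1))) / (1 - t ^ 2)) *
      (∏ j : Fin s, ∏ k ∈ Ioi j, (t * z k - t * z j))) * hT +
    ((t ^ (s * (s - 1)))⁻¹ * (∏ j : Fin s, (1 - t ^ (2 * (j.val + 1))) / (1 - t ^ 2)) *
      (∏ j : Fin s, ∏ k ∈ Ioi j, (t * z k - t * z j))) * hprod
end
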